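/- The Möbius transformation μ(X) = (-1 + √-3 + (3 - √-3)X)/(2√-3 + 6(1 - √-3)X) over ℚ(√-3) maps the sextic F(X) to its complex conjugate: F̄(μ(X))·(2√-3 + 6(1-√-3)X)⁶ = (24√-3)²·F(X) up to the exact constant making Y² = F(X) transform to Ȳ² = F̄(X̄) under (X,Y) ↦ (μ(X), 24√-3·Y/(2√-3+6(1-√-3)X)³). -/

import Mathlib

/-- The sextic F(X) defining the curve C of level 243, with √-3 as a parameter s. -/
noncomputable def sexticF (s x : ℂ) : ℂ :=
  (4 * (3 - 2 * s) / 9) * x ^ 6 + (8 * (-1 + s) / 3) * x ^ 5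
    + (4 * (3 - 7 * s) / 9) * x ^ 4 + (2 * (7 + 23 * s) / 27) * x ^ 3
    - ((11 + 7 * s) / 18) * x ^ 2 + ((15 + s) / 108) * x + (-2 + s) / 324

/-- The Möbius transformation μ(X) = (-1 + √-3 + (3 - √-3)X)/(2√-3 + 6(1 - √-3)X). -/
noncomputable def mobius16 (s x : ℂ) : ℂ :=
  (-1 + s + (3 - s) * x) / (2 * s + 6 * (1 - s) * x)

noncomputable def sexticForm (s N q : ℂ) : ℂ :=
  (4 * (3 - 2 * s) / 9) * N ^ 6 + (8 * (-1 + s) / 3) * N ^ 5 * q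
    + (4 * (3 - 7 * s) / 9) * N ^ 4 * q ^ 2 + (2 * (7 + 23 * s) / 27) * N ^ 3 * q ^ 3
    - ((11 + 7 * s) / 18) * N ^ 2 * q ^ 4 + ((15 + s) / 108) * N * q ^ 5
    + (-2 + s) / 324 * q ^ 6

theorem sexticF_div_mul_pow_six (s N : ℂ) {q : ℂ} (hq : q ≠ 0) :
    sexticF s (N / q) * q ^ 6 = sexticForm s N q := by
  unfold sexticF sexticForm
  field_simp

-- A polynomial identity in `s` and `x` modulo `s ^ 2 + 3`.
theorem sexticForm_neg_mobius_num_den {s : ℂ} (hs : s ^ 2 = -3) (x : ℂ) :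
    sexticForm (-s) (-1 + s + (3 - s) * x) (2 * s + 6 * (1 - s) * x)
      = (24 * s) ^ 2 * sexticF s x := by
  have hs3 : s ^ 3 = -3 * s := by linear_combination s * hs
  have hs4 : s ^ 4 = 9 := by linear_combination (s ^ 2 - 3) * hs
  have hs5 : s ^ 5 = 9 * s := by linear_combination (s ^ 3 - 3 * s) * hs
  have hs6 : s ^ 6 = -27 := by linear_combination (s ^ 4 - 3 * s ^ 2 + 9) * hs
  have hs7 : s ^ 7 = -27 * s := by linear_combination (s ^ 5 - 3 * s ^ 3 + 9 * s) * hs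
  unfold sexticF sexticForm
  ring_nf
  simp only [hs, hs3, hs4, hs5, hs6, hs7]
  ring

/-- the Möbius transformation μ carries F to its conjugate F̄ (obtained
by s ↦ -s): the identity F̄(μ(X))·q(X)⁶ = (24√-3)²·F(X) holds, with
q(X) = 2√-3 + 6(1-√-3)X; this is exactly the constant making Y² = F(X) transform to
Ȳ² = F̄(X̄) under (X,Y) ↦ (μ(X), 24√-3·Y/q(X)³). -/
theorem sexticF_transforms_to_conjugate
    (s : ℂ) (hs : s ^ 2 = -3) (x : ℂ)
    (hq : 2 * s + 6 * (1 - s) * x ≠ 0) :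
    sexticF (-s) (mobius16 s x) * (2 * s + 6 * (1 - s) * x) ^ 6
      = (24 * s) ^ 2 * sexticF s x := by
  rw [mobius16, sexticF_div_mul_pow_six _ _ hq, sexticForm_neg_mobius_num_den hs]
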